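/- arXiv:1609.06869 — 2 statements merged into one kernel-verified Lean document; each statement's English description precedes it below -/
import Mathlib

section
/- Let H be a complex Hilbert space, let T be a densely defined closed positive linear operator in H with m(T) > 0, let 0 < ε < m(T), and let x_ε ∈ D(T) be a unit vector with ⟨T x_ε, x_ε⟩ < m(T) + ε/2. Define the rank one operator C_ε on H by C_ε(x) = ε⟨x, x_ε⟩x_ε. Then the operator T_ε = T − C_ε (with domain D(T)) satisfies ⟨T_ε x, x⟩ ≥ (m(T) − ε)‖x‖² for all x ∈ D(T), and m(T_ε) ≤ ⟨T x_ε, x_ε⟩ − ε < m(T) − ε/2. -/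
open scoped InnerProductSpace

/-- Orthogonal projection (as an operator on `E`) onto the closure of a submodule. -/
noncomputable def projCL {E : Type*} [NormedAddCommGroup E] [InnerProductSpace ℂ E]
    [CompleteSpace E] (M : Submodule ℂ E) : E →L[ℂ] E :=
  haveI : CompleteSpace M.topologicalClosure :=
    M.isClosed_topologicalClosure.completeSpace_coe
  M.topologicalClosure.subtypeL.comp M.topologicalClosure.orthogonalProjectionOnto

/-- The graph of a partially defined operator, viewed inside the Hilbert space `E ×₂ F`. -/
noncomputable def graphL2 {E F : Type*} [NormedAddCommGroup E] [InnerProductSpace ℂ E]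
    [NormedAddCommGroup F] [InnerProductSpace ℂ F] (T : E →ₗ.[ℂ] F) :
    Submodule ℂ (WithLp 2 (E × F)) :=
  T.graph.map ((WithLp.linearEquiv 2 ℂ (E × F)).symm : (E × F) →ₗ[ℂ] WithLp 2 (E × F))

/-- The gap `θ(S,T) = ‖P_{G(S)} - P_{G(T)}‖` between two (partially defined) operators. -/
noncomputable def gap {E F : Type*} [NormedAddCommGroup E] [InnerProductSpace ℂ E]
    [NormedAddCommGroup F] [InnerProductSpace ℂ F] [CompleteSpace E] [CompleteSpace F]
    (S T : E →ₗ.[ℂ] F) : ℝ :=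
  ‖projCL (graphL2 S) - projCL (graphL2 T)‖

/-- The minimum modulus `m(T) = inf {‖Tx‖ : x ∈ D(T), ‖x‖ = 1}` of a partially
defined operator. -/
noncomputable def minModulus {E F : Type*} [NormedAddCommGroup E] [InnerProductSpace ℂ E]
    [NormedAddCommGroup F] [InnerProductSpace ℂ F] (T : E →ₗ.[ℂ] F) : ℝ :=
  sInf ((fun x : T.domain => ‖T x‖) '' {x : T.domain | ‖(x : E)‖ = 1})

/-- A partially defined operator is minimum attaining if its minimum modulus is attained
at a unit vector of its domain. -/
def MinAttaining {E F : Type*} [NormedAddCommGroup E] [InnerProductSpace ℂ E]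
    [NormedAddCommGroup F] [InnerProductSpace ℂ F] (T : E →ₗ.[ℂ] F) : Prop :=
  ∃ x₀ : T.domain, ‖(x₀ : E)‖ = 1 ∧ ‖T x₀‖ = minModulus T

/-- The sum `T + S` of a partially defined operator `T` and a bounded operator `S`,
with domain `D(T)`. -/
def addBdd {E F : Type*} [NormedAddCommGroup E] [InnerProductSpace ℂ E]
    [NormedAddCommGroup F] [InnerProductSpace ℂ F] (T : E →ₗ.[ℂ] F) (S : E →L[ℂ] F) :
    E →ₗ.[ℂ] F :=
  ⟨T.domain, T.toFun + (S : E →ₗ[ℂ] F).comp T.domain.subtype⟩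

/-- The minimum modulus `m(T) = inf {‖Tx‖ : ‖x‖ = 1}` of a bounded operator. -/
noncomputable def minModulusB {E F : Type*} [NormedAddCommGroup E] [InnerProductSpace ℂ E]
    [NormedAddCommGroup F] [InnerProductSpace ℂ F] (T : E →L[ℂ] F) : ℝ :=
  sInf ((fun x : E => ‖T x‖) '' {x : E | ‖x‖ = 1})

/-- A bounded operator is minimum attaining if its minimum modulus is attained at a
unit vector. -/
def MinAttainingB {E F : Type*} [NormedAddCommGroup E] [InnerProductSpace ℂ E]
    [NormedAddCommGroup F] [InnerProductSpace ℂ F] (T : E →L[ℂ] F) : Prop :=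
  ∃ x₀ : E, ‖x₀‖ = 1 ∧ ‖T x₀‖ = minModulusB T

/-!
A positive self-adjoint operator `A` with `m(A) > 0` is closed and bounded below, so its range is
closed; its orthogonal complement is `ker A = 0`, hence `A` is onto. Writing `x = A w`,
Cauchy–Schwarz for the positive form `⟪A ·, ·⟫` gives
`‖x‖⁴ = ⟪A x, w⟫² ≤ ⟪A x, x⟫ ⟪x, w⟫ ≤ ⟪A x, x⟫ ‖x‖² / m(A)`, i.e. `m(A) ‖x‖² ≤ ⟪A x, x⟫`.
For `A = T` this gives the first estimate, since `⟪Cε x, x⟫ = ε |⟪xε, x⟫|² ≤ ε ‖x‖²`. The bounded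
symmetric perturbation `Tε` is again self-adjoint, and positive by the first estimate, so the same
bound at `xε` gives `m(Tε) ≤ ⟪Tε xε, xε⟫ = ⟪T xε, xε⟫ - ε`.
-/

section MinModulus

variable {E F : Type*} [NormedAddCommGroup E] [InnerProductSpace ℂ E]
  [NormedAddCommGroup F] [InnerProductSpace ℂ F]

theorem minModulus_nonneg (A : E →ₗ.[ℂ] F) : 0 ≤ minModulus A :=
  Real.sInf_nonneg (by rintro r ⟨x, -, rfl⟩; positivity)

theorem minModulus_mul_norm_le (A : E →ₗ.[ℂ] F) (x : A.domain) :
    minModulus A * ‖(x : E)‖ ≤ ‖A x‖ := by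
  rcases eq_or_ne (x : E) 0 with hx | hx
  · simp [hx]
  have hnx : 0 < ‖(x : E)‖ := norm_pos_iff.mpr hx
  let u : A.domain := ((‖(x : E)‖⁻¹ : ℝ) : ℂ) • x
  have hu : ‖(u : E)‖ = 1 := by
    simp [u, norm_smul, hnx.ne']
  have hle : minModulus A ≤ ‖A u‖ :=
    csInf_le ⟨0, by rintro r ⟨y, -, rfl⟩; positivity⟩ ⟨u, hu, rfl⟩
  rw [LinearPMap.map_smul, norm_smul, Complex.norm_real, Real.norm_of_nonneg (by positivity),
    inv_mul_eq_div, le_div_iff₀ hnx] at hle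
  exact hle

theorem isClosed_range_of_minModulus_pos [CompleteSpace E] [CompleteSpace F] {A : E →ₗ.[ℂ] F}
    (hA : A.IsClosed) (hm : 0 < minModulus A) : IsClosed (Set.range A) := by
  have : CompleteSpace A.graph := hA.completeSpace_coe
  let f : A.graph →L[ℂ] F := (ContinuousLinearMap.snd ℂ E F).comp A.graph.subtypeL
  have hf : AntilipschitzWith (Real.toNNReal ((minModulus A)⁻¹ + 1)) f := by
    refine f.antilipschitz_of_bound fun p => ?_
    obtain ⟨x, hx₁, hx₂⟩ := (LinearPMap.mem_graph_iff A).mp p.2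
    have hbound := minModulus_mul_norm_le A x
    have hx : ‖(x : E)‖ ≤ (minModulus A)⁻¹ * ‖A x‖ := by rwa [le_inv_mul_iff₀ hm]
    change ‖(p : E × F)‖ ≤ _ * ‖(p : E × F).2‖
    rw [Real.coe_toNNReal _ (by positivity), norm_prod_le_iff, ← hx₁, ← hx₂, add_one_mul]
    have hAx : 0 ≤ (minModulus A)⁻¹ * ‖A x‖ := by positivity
    constructor <;> linarith [norm_nonneg (A x)]
  have hrange : Set.range f = Set.range A := by
    ext y
    constructor
    · rintro ⟨p, rfl⟩
      obtain ⟨x, -, hx⟩ := (LinearPMap.mem_graph_iff A).mp p.2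
      exact ⟨x, hx⟩
    · rintro ⟨x, rfl⟩
      exact ⟨⟨_, A.mem_graph x⟩, rfl⟩
  exact hrange ▸ hf.isClosed_range f.uniformContinuous

end MinModulus

theorem LinearPMap.IsFormalAdjoint.re_inner_sq_le {E : Type*} [NormedAddCommGroup E]
    [InnerProductSpace ℂ E] {A : E →ₗ.[ℂ] E} (hA : A.IsFormalAdjoint A)
    (hpos : ∀ x : A.domain, 0 ≤ (⟪A x, x⟫_ℂ).re) (x y : A.domain) :
    (⟪A x, y⟫_ℂ).re ^ 2 ≤ (⟪A x, x⟫_ℂ).re * (⟪A y, y⟫_ℂ).re := by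
  have hsymm : (⟪A y, x⟫_ℂ).re = (⟪A x, y⟫_ℂ).re := by
    rw [hA y x, ← inner_conj_symm, Complex.conj_re]
  have hquad : ∀ t : ℝ, 0 ≤ (⟪A y, y⟫_ℂ).re * (t * t) + -2 * (⟪A x, y⟫_ℂ).re * t
      + (⟪A x, x⟫_ℂ).re := by
    intro t
    have hnonneg := hpos (x - (t : ℂ) • y)
    simp only [LinearPMap.map_sub, LinearPMap.map_smul, Submodule.coe_sub, Submodule.coe_smul,
      inner_sub_left, inner_sub_right, inner_smul_left, inner_smul_right, Complex.conj_ofReal,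
      Complex.sub_re, Complex.re_ofReal_mul, hsymm] at hnonneg
    linarith
  have hdisc := discrim_le_zero hquad
  rw [discrim] at hdisc
  linarith

section SelfAdjoint

variable {H : Type*} [NormedAddCommGroup H] [InnerProductSpace ℂ H] [CompleteSpace H]
  {A : H →ₗ.[ℂ] H}

theorem IsSelfAdjoint.isFormalAdjoint (hA : IsSelfAdjoint A) : A.IsFormalAdjoint A := by
  have h := LinearPMap.adjoint_isFormalAdjoint hA.dense_domain (T := A)
  rwa [LinearPMap.isSelfAdjoint_def.mp hA] at h

theorem IsSelfAdjoint.range_eq_top_of_minModulus_pos (hA : IsSelfAdjoint A)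
    (hm : 0 < minModulus A) : LinearMap.range A.toFun = ⊤ := by
  have hR : IsClosed (LinearMap.range A.toFun : Set H) := by
    rw [LinearMap.coe_range]; exact isClosed_range_of_minModulus_pos hA.isClosed hm
  have : CompleteSpace (LinearMap.range A.toFun) := hR.completeSpace_coe
  rw [← Submodule.orthogonal_eq_bot_iff, Submodule.eq_bot_iff]
  intro z hz
  have hz' : ∀ x : A.domain, ⟪(0 : H), x⟫_ℂ = ⟪z, A x⟫_ℂ := fun x => by
    rw [inner_zero_left]
    exact (Submodule.inner_left_of_mem_orthogonal (LinearMap.mem_range_self A.toFun x) hz).symm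
  have hzdom : z ∈ A.adjoint.domain := LinearPMap.mem_adjoint_domain_of_exists z ⟨0, hz'⟩
  have hgraph : (z, (0 : H)) ∈ A.graph := by
    rw [← LinearPMap.isSelfAdjoint_def.mp hA]
    simpa [LinearPMap.adjoint_apply_eq hA.dense_domain ⟨z, hzdom⟩ hz'] using
      A.adjoint.mem_graph ⟨z, hzdom⟩
  obtain ⟨x, rfl, hx⟩ := (LinearPMap.mem_graph_iff A).mp hgraph
  have := minModulus_mul_norm_le A x
  rw [hx, norm_zero] at this
  exact norm_le_zero_iff.mp (nonpos_of_mul_nonpos_right this hm)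

theorem IsSelfAdjoint.minModulus_mul_norm_sq_le_re_inner (hA : IsSelfAdjoint A)
    (hpos : ∀ x : A.domain, 0 ≤ (⟪A x, x⟫_ℂ).re) (x : A.domain) :
    minModulus A * ‖(x : H)‖ ^ 2 ≤ (⟪A x, x⟫_ℂ).re := by
  rcases (minModulus_nonneg A).eq_or_lt with hm | hm
  · rw [← hm, zero_mul]; exact hpos x
  rcases eq_or_ne (x : H) 0 with hx | hx
  · simp [hx]
  obtain ⟨w, hw⟩ : ∃ w : A.domain, A w = x :=
    LinearMap.mem_range.mp (hA.range_eq_top_of_minModulus_pos hm ▸ Submodule.mem_top)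
  have hxw : (⟪A x, w⟫_ℂ).re = ‖(x : H)‖ ^ 2 := by
    rw [hA.isFormalAdjoint x w, hw]; exact inner_self_eq_norm_sq (𝕜 := ℂ) _
  have hcs := hA.isFormalAdjoint.re_inner_sq_le hpos x w
  have hww : (⟪A w, w⟫_ℂ).re ≤ ‖(x : H)‖ * ‖(w : H)‖ := by
    rw [hw]; exact re_inner_le_norm (𝕜 := ℂ) _ _
  have hmw : minModulus A * ‖(w : H)‖ ≤ ‖(x : H)‖ := hw ▸ minModulus_mul_norm_le A w
  have hnx : 0 < ‖(x : H)‖ := norm_pos_iff.mpr hx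
  rw [hxw] at hcs
  have hmul : minModulus A * ‖(x : H)‖ ^ 2 * ‖(x : H)‖ ^ 2 ≤ (⟪A x, x⟫_ℂ).re * ‖(x : H)‖ ^ 2 :=
    calc minModulus A * ‖(x : H)‖ ^ 2 * ‖(x : H)‖ ^ 2
        ≤ minModulus A * ((⟪A x, x⟫_ℂ).re * (‖(x : H)‖ * ‖(w : H)‖)) := by
          rw [mul_assoc, ← pow_two]
          gcongr
          exact hcs.trans (mul_le_mul_of_nonneg_left hww (hpos x))
      _ = (⟪A x, x⟫_ℂ).re * ‖(x : H)‖ * (minModulus A * ‖(w : H)‖) := by ring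
      _ ≤ (⟪A x, x⟫_ℂ).re * ‖(x : H)‖ * ‖(x : H)‖ :=
          mul_le_mul_of_nonneg_left hmw (mul_nonneg (hpos x) hnx.le)
      _ = (⟪A x, x⟫_ℂ).re * ‖(x : H)‖ ^ 2 := by ring
  exact le_of_mul_le_mul_right hmul (by positivity)

end SelfAdjoint

section BoundedPerturbation

theorem addBdd_apply {E F : Type*} [NormedAddCommGroup E] [InnerProductSpace ℂ E]
    [NormedAddCommGroup F] [InnerProductSpace ℂ F] (A : E →ₗ.[ℂ] F) (S : E →L[ℂ] F)
    (x : (addBdd A S).domain) : addBdd A S x = A x + S x :=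
  rfl

variable {H : Type*} [NormedAddCommGroup H] [InnerProductSpace ℂ H]

theorem isFormalAdjoint_addBdd {A : H →ₗ.[ℂ] H} (hA : A.IsFormalAdjoint A) {S : H →L[ℂ] H}
    (hS : (S : H →ₗ[ℂ] H).IsSymmetric) : (addBdd A S).IsFormalAdjoint (addBdd A S) :=
  fun x y => by
    rw [addBdd_apply, addBdd_apply, inner_add_left, inner_add_right, hA x y]
    exact congrArg _ (hS x y)

theorem isSelfAdjoint_addBdd [CompleteSpace H] {A : H →ₗ.[ℂ] H} (hA : IsSelfAdjoint A)
    {S : H →L[ℂ] H} (hS : IsSelfAdjoint S) : IsSelfAdjoint (addBdd A S) := by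
  have hdense : Dense ((addBdd A S).domain : Set H) := hA.dense_domain
  have hle : addBdd A S ≤ (addBdd A S).adjoint :=
    (isFormalAdjoint_addBdd hA.isFormalAdjoint hS.isSymmetric).le_adjoint hdense
  have hdom : (addBdd A S).adjoint.domain ≤ A.domain := by
    intro y hy
    rw [← LinearPMap.isSelfAdjoint_def.mp hA]
    refine LinearPMap.mem_adjoint_domain_of_exists y
      ⟨(addBdd A S).adjoint ⟨y, hy⟩ - S y, fun x => ?_⟩
    have h : ⟪(addBdd A S).adjoint ⟨y, hy⟩, (x : H)⟫_ℂ = ⟪y, A x⟫_ℂ + ⟪S y, x⟫_ℂ := by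
      rw [show ⟪S y, (x : H)⟫_ℂ = ⟪y, S x⟫_ℂ from hS.isSymmetric y x, ← inner_add_right]
      exact LinearPMap.adjoint_isFormalAdjoint hdense ⟨y, hy⟩ x
    rw [inner_sub_left, h, add_sub_cancel_right]
  exact LinearPMap.isSelfAdjoint_def.mpr
    (LinearPMap.eq_of_le_of_domain_eq hle (le_antisymm hle.1 hdom)).symm

theorem re_inner_rankOne_self_apply (v x : H) :
    (⟪InnerProductSpace.rankOne ℂ v v x, x⟫_ℂ).re = ‖⟪v, x⟫_ℂ‖ ^ 2 := by
  rw [InnerProductSpace.rankOne_apply, inner_smul_left, Complex.conj_mul']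
  norm_cast

end BoundedPerturbation

theorem rankOne_perturbation_estimates_general {H : Type*}
    [NormedAddCommGroup H] [InnerProductSpace ℂ H] [CompleteSpace H]
    (T : H →ₗ.[ℂ] H)
    (hsa : IsSelfAdjoint T)
    (hpos : ∀ x : T.domain, 0 ≤ (inner ℂ (T x) (x : H) : ℂ).re)
    (ε : ℝ) (hε : 0 < ε) (hεm : ε < minModulus T)
    (xε : T.domain) (hxε : ‖(xε : H)‖ = 1)
    (hxεm : (inner ℂ (T xε) ((xε : H)) : ℂ).re < minModulus T + ε / 2)
    (Cε : H →L[ℂ] H)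
    (hCε : Cε = (ε : ℂ) • (innerSL ℂ ((xε : H))).smulRight ((xε : H))) :
    (∀ x : (addBdd T (-Cε)).domain,
        (minModulus T - ε) * ‖(x : H)‖ ^ 2 ≤ (inner ℂ ((addBdd T (-Cε)) x) (x : H) : ℂ).re) ∧
      minModulus (addBdd T (-Cε)) ≤ (inner ℂ (T xε) ((xε : H)) : ℂ).re - ε ∧
      (inner ℂ (T xε) ((xε : H)) : ℂ).re - ε < minModulus T - ε / 2 := by
  rw [← InnerProductSpace.rankOne_def] at hCε
  have hform (x : (addBdd T (-Cε)).domain) : (⟪addBdd T (-Cε) x, x⟫_ℂ).re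
      = (⟪T x, x⟫_ℂ).re - ε * ‖⟪(xε : H), x⟫_ℂ‖ ^ 2 := by
    rw [addBdd_apply, hCε, inner_add_left, neg_apply, smul_apply, inner_neg_left,
      inner_smul_left, Complex.conj_ofReal, Complex.add_re, Complex.neg_re, Complex.re_ofReal_mul,
      re_inner_rankOne_self_apply]
    ring
  have hlower (x : (addBdd T (-Cε)).domain) :
      (minModulus T - ε) * ‖(x : H)‖ ^ 2 ≤ (⟪addBdd T (-Cε) x, x⟫_ℂ).re := by
    have hT := hsa.minModulus_mul_norm_sq_le_re_inner hpos x
    have hCS : ‖⟪(xε : H), x⟫_ℂ‖ ≤ ‖(x : H)‖ := by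
      simpa [hxε] using norm_inner_le_norm (𝕜 := ℂ) (xε : H) x
    have hCS2 := mul_le_mul_of_nonneg_left (pow_le_pow_left₀ (norm_nonneg _) hCS 2) hε.le
    rw [hform]
    linarith
  have hTε : IsSelfAdjoint (addBdd T (-Cε)) := isSelfAdjoint_addBdd hsa <| hCε ▸
    (IsSelfAdjoint.smul (Complex.conj_ofReal ε)
      (InnerProductSpace.isSymmetric_rankOne_self (xε : H)).isSelfAdjoint).neg
  have hTεpos (x : (addBdd T (-Cε)).domain) : 0 ≤ (⟪addBdd T (-Cε) x, x⟫_ℂ).re :=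
    (hlower x).trans' (mul_nonneg (sub_nonneg.mpr hεm.le) (sq_nonneg _))
  have hmin := hTε.minModulus_mul_norm_sq_le_re_inner hTεpos xε
  refine ⟨hlower, ?_, by linarith⟩
  simpa [hform xε, hxε] using hmin

/-- Key estimates in the construction: for a densely defined closed positive operator `T`
with `m(T) > 0`, `0 < ε < m(T)`, a unit vector `xε ∈ D(T)` with `⟨T xε, xε⟩ < m(T) + ε/2`,
and the rank one operator `Cε x = ε ⟪xε, x⟫ xε`, the operator `Tε = T - Cε` satisfies
`⟨Tε x, x⟩ ≥ (m(T) - ε) ‖x‖²` on `D(T)` and `m(Tε) ≤ ⟨T xε, xε⟩ - ε < m(T) - ε/2`. -/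
theorem rankOne_perturbation_estimates {H : Type*}
    [NormedAddCommGroup H] [InnerProductSpace ℂ H] [CompleteSpace H]
    (T : H →ₗ.[ℂ] H)
    (hdense : Dense (T.domain : Set H)) (hclosed : T.IsClosed)
    (hsa : IsSelfAdjoint T)
    (hpos : ∀ x : T.domain, 0 ≤ (inner ℂ (T x) (x : H) : ℂ).re)
    (hm : 0 < minModulus T) (ε : ℝ) (hε : 0 < ε) (hεm : ε < minModulus T)
    (xε : T.domain) (hxε : ‖(xε : H)‖ = 1)
    (hxεm : (inner ℂ (T xε) ((xε : H)) : ℂ).re < minModulus T + ε / 2)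
    (Cε : H →L[ℂ] H)
    (hCε : Cε = (ε : ℂ) • (innerSL ℂ ((xε : H))).smulRight ((xε : H))) :
    (∀ x : (addBdd T (-Cε)).domain,
        (minModulus T - ε) * ‖(x : H)‖ ^ 2 ≤ (inner ℂ ((addBdd T (-Cε)) x) (x : H) : ℂ).re) ∧
      minModulus (addBdd T (-Cε)) ≤ (inner ℂ (T xε) ((xε : H)) : ℂ).re - ε ∧
      (inner ℂ (T xε) ((xε : H)) : ℂ).re - ε < minModulus T - ε / 2 :=
  rankOne_perturbation_estimates_general T hsa hpos ε hε hεm xε hxε hxεm Cε hCε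
end

section
/- Let H be a complex Hilbert space and let T be a densely defined closed positive linear operator in H. Then m(T) = inf{⟨Tx, x⟩ : x ∈ D(T), ‖x‖ = 1}, i.e. the minimum modulus of T equals the infimum of the quadratic form of T over unit vectors of the domain. -/
open scoped InnerProductSpace

/-! The bound `inf ⟪Tx, x⟫ ≤ m(T)` is Cauchy–Schwarz. Conversely, if `c = m(T) > 0`, then `T` is
bounded below by `c`, so its range is closed (`T` is closed) and dense (its orthogonal complement
is `ker T† = ker T = 0`): `T` is onto. Writing a unit vector as `x = T w`, the Cauchy–Schwarz
inequality for the positive form `(u, v) ↦ ⟪T u, v⟫` gives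
`1 = |⟪T x, w⟫|² ≤ ⟪T x, x⟫ ⟪T w, w⟫ ≤ ⟪T x, x⟫ ‖w‖ ≤ ⟪T x, x⟫ / c`. -/

section Normed

variable {𝕜 E F : Type*} [RCLike 𝕜] [NormedAddCommGroup E] [NormedSpace 𝕜 E]
  [NormedAddCommGroup F] [NormedSpace 𝕜 F] {T : E →ₗ.[𝕜] F}

theorem LinearPMap.mul_norm_le_of_forall_norm_eq_one {c : ℝ}
    (h : ∀ x : T.domain, ‖(x : E)‖ = 1 → c ≤ ‖T x‖) (x : T.domain) :
    c * ‖(x : E)‖ ≤ ‖T x‖ := by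
  rcases eq_or_ne (x : E) 0 with hx | hx
  · simp [hx]
  have hu := h ((‖(x : E)‖⁻¹ : 𝕜) • x) (norm_smul_inv_norm hx)
  rw [LinearPMap.map_smul, norm_smul, norm_inv, RCLike.norm_ofReal, abs_norm,
    inv_mul_eq_div, le_div_iff₀ (norm_pos_iff.2 hx)] at hu
  exact hu

end Normed

section Closed

variable {𝕜 E F : Type*} [NormedField 𝕜] [NormedAddCommGroup E] [NormedSpace 𝕜 E] [CompleteSpace E]
  [NormedAddCommGroup F] [NormedSpace 𝕜 F] [CompleteSpace F] {T : E →ₗ.[𝕜] F}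

theorem LinearPMap.IsClosed.isClosed_range_of_mul_norm_le (hT : T.IsClosed) {c : ℝ} (hc : 0 < c)
    (h : ∀ x : T.domain, c * ‖(x : E)‖ ≤ ‖T x‖) :
    _root_.IsClosed (LinearMap.range T.toFun : Set F) := by
  have : CompleteSpace T.graph := hT.completeSpace_coe
  let snd : T.graph →L[𝕜] F := (ContinuousLinearMap.snd 𝕜 E F).comp T.graph.subtypeL
  have hsnd : AntilipschitzWith (c.toNNReal⁻¹ + 1) snd := by
    refine snd.antilipschitz_of_bound fun p => ?_
    obtain ⟨x, hx, hTx⟩ := T.mem_graph_iff.mp p.2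
    have hfst : ‖(p : E × F).1‖ ≤ c⁻¹ * ‖(p : E × F).2‖ := by
      rw [← hx, ← hTx, le_inv_mul_iff₀ hc]
      exact h x
    have hsnd_apply : snd p = (p : E × F).2 := rfl
    rw [hsnd_apply, Submodule.coe_norm, Prod.norm_def, NNReal.coe_add, NNReal.coe_inv,
      Real.coe_toNNReal _ hc.le, NNReal.coe_one, add_mul, one_mul]
    exact max_le (hfst.trans (le_add_of_nonneg_right (norm_nonneg _)))
      (le_add_of_nonneg_left (by positivity))
  have hrange : (LinearMap.range T.toFun : Set F) = Set.range snd := by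
    rw [← LinearPMap.graph_map_snd_eq_range, Submodule.map_coe, Set.image_eq_range]
    rfl
  rw [hrange]
  exact hsnd.isClosed_range snd.uniformContinuous

end Closed

section SelfAdjoint

open LinearPMap

variable {𝕜 E : Type*} [RCLike 𝕜] [NormedAddCommGroup E] [InnerProductSpace 𝕜 E] [CompleteSpace E]
  {T : E →ₗ.[𝕜] E}

theorem IsSelfAdjoint.isFormalAdjoint_s15 (hT : IsSelfAdjoint T) : T.IsFormalAdjoint T := by
  have := adjoint_isFormalAdjoint hT.dense_domain
  rwa [isSelfAdjoint_def.mp hT] at this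

theorem IsSelfAdjoint.exists_apply_eq_of_inner_eq (hT : IsSelfAdjoint T) {y z : E}
    (h : ∀ x : T.domain, ⟪z, x⟫_𝕜 = ⟪y, T x⟫_𝕜) : ∃ y' : T.domain, (y' : E) = y ∧ T y' = z := by
  have hy : y ∈ T†.domain := mem_adjoint_domain_of_exists y ⟨z, h⟩
  obtain ⟨y', hyy', hTy'⟩ := exists_of_le (isSelfAdjoint_def.mp hT).le ⟨y, hy⟩
  exact ⟨y', hyy'.symm, hTy' ▸ adjoint_apply_eq hT.dense_domain ⟨y, hy⟩ h⟩

theorem IsSelfAdjoint.range_eq_top_of_mul_norm_le (hT : IsSelfAdjoint T) {c : ℝ} (hc : 0 < c)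
    (h : ∀ x : T.domain, c * ‖(x : E)‖ ≤ ‖T x‖) : LinearMap.range T.toFun = ⊤ := by
  have hclosed := hT.isClosed.isClosed_range_of_mul_norm_le hc h
  have horth : (LinearMap.range T.toFun)ᗮ = ⊥ := by
    refine (Submodule.eq_bot_iff _).2 fun y hy => ?_
    obtain ⟨y', rfl, hTy'⟩ := hT.exists_apply_eq_of_inner_eq (y := y) (z := 0) fun x => by
      rw [inner_zero_left]
      exact (Submodule.inner_left_of_mem_orthogonal (LinearMap.mem_range_self _ x) hy).symm
    have := h y'
    rw [hTy', norm_zero] at this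
    exact norm_le_zero_iff.mp (nonpos_of_mul_nonpos_right this hc)
  rw [← hclosed.submodule_topologicalClosure_eq, ← Submodule.orthogonal_orthogonal_eq_closure,
    horth, Submodule.bot_orthogonal_eq_top]

theorem IsSelfAdjoint.inner_mul_inner_self_le (hT : IsSelfAdjoint T)
    (hpos : ∀ x : T.domain, 0 ≤ RCLike.re ⟪T x, x⟫_𝕜) (x y : T.domain) :
    ‖⟪T x, y⟫_𝕜‖ * ‖⟪T y, x⟫_𝕜‖ ≤ RCLike.re ⟪T x, x⟫_𝕜 * RCLike.re ⟪T y, y⟫_𝕜 :=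
  letI form : PreInnerProductSpace.Core 𝕜 T.domain :=
    { inner := fun a b => ⟪T a, b⟫_𝕜
      conj_inner_symm := fun a b => by rw [hT.isFormalAdjoint_s15 b a, inner_conj_symm]
      re_inner_nonneg := hpos
      add_left := fun a b z => by simp only [LinearPMap.map_add, inner_add_left]
      smul_left := fun a b r => by simp only [LinearPMap.map_smul, inner_smul_left] }
  InnerProductSpace.Core.inner_mul_inner_self_le (c := form) x y

theorem IsSelfAdjoint.mul_norm_sq_le_re_inner (hT : IsSelfAdjoint T)
    (hpos : ∀ x : T.domain, 0 ≤ RCLike.re ⟪T x, x⟫_𝕜) {c : ℝ} (hc : 0 < c)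
    (h : ∀ x : T.domain, c * ‖(x : E)‖ ≤ ‖T x‖) (x : T.domain) :
    c * ‖(x : E)‖ ^ 2 ≤ RCLike.re ⟪T x, x⟫_𝕜 := by
  have hx : (x : E) ∈ LinearMap.range T.toFun := by
    rw [hT.range_eq_top_of_mul_norm_le hc h]
    trivial
  obtain ⟨w, hw⟩ : ∃ w : T.domain, T w = x := LinearMap.mem_range.mp hx
  have hcs := hT.inner_mul_inner_self_le hpos x w
  rw [hT.isFormalAdjoint_s15 x w, hw, inner_self_eq_norm_sq_to_K, norm_pow, RCLike.norm_ofReal,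
    abs_norm] at hcs
  have hw_form : RCLike.re ⟪(x : E), w⟫_𝕜 ≤ ‖(x : E)‖ * ‖(w : E)‖ :=
    (RCLike.re_le_norm _).trans (norm_inner_le_norm _ _)
  have hw_norm : c * ‖(w : E)‖ ≤ ‖(x : E)‖ := hw ▸ h w
  rcases (norm_nonneg (x : E)).eq_or_lt with hx0 | hx0
  · simpa [← hx0] using hpos x
  refine le_of_mul_le_mul_right ?_ (pow_pos hx0 2)
  calc c * ‖(x : E)‖ ^ 2 * ‖(x : E)‖ ^ 2
      ≤ c * (RCLike.re ⟪T x, x⟫_𝕜 * (‖(x : E)‖ * ‖(w : E)‖)) := by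
        rw [mul_assoc]
        exact mul_le_mul_of_nonneg_left
          (hcs.trans (mul_le_mul_of_nonneg_left hw_form (hpos x))) hc.le
    _ = RCLike.re ⟪T x, x⟫_𝕜 * ‖(x : E)‖ * (c * ‖(w : E)‖) := by ring
    _ ≤ RCLike.re ⟪T x, x⟫_𝕜 * ‖(x : E)‖ * ‖(x : E)‖ :=
        mul_le_mul_of_nonneg_left hw_norm (mul_nonneg (hpos x) hx0.le)
    _ = RCLike.re ⟪T x, x⟫_𝕜 * ‖(x : E)‖ ^ 2 := by ring

end SelfAdjoint

theorem minModulus_eq_sInf_quadraticForm_general {H : Type*}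
    [NormedAddCommGroup H] [InnerProductSpace ℂ H] [CompleteSpace H]
    (T : H →ₗ.[ℂ] H)
    (hsa : IsSelfAdjoint T)
    (hpos : ∀ x : T.domain, 0 ≤ (inner ℂ (T x) (x : H) : ℂ).re) :
    minModulus T =
      sInf ((fun x : T.domain => (inner ℂ (T x) (x : H) : ℂ).re) ''
        {x : T.domain | ‖(x : H)‖ = 1}) := by
  unfold minModulus
  set U := {x : T.domain | ‖(x : H)‖ = 1}
  rcases U.eq_empty_or_nonempty with hU | hU
  · rw [hU, Set.image_empty, Set.image_empty]
  set m := sInf ((fun x : T.domain => ‖T x‖) '' U)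
  set β := sInf ((fun x : T.domain => (inner ℂ (T x) (x : H) : ℂ).re) '' U)
  have hm : ∀ x ∈ U, m ≤ ‖T x‖ := fun x hx =>
    csInf_le ⟨0, by rintro _ ⟨y, -, rfl⟩; exact norm_nonneg _⟩ ⟨x, hx, rfl⟩
  have hβ : ∀ x ∈ U, β ≤ (inner ℂ (T x) (x : H) : ℂ).re := fun x hx =>
    csInf_le ⟨0, by rintro _ ⟨y, -, rfl⟩; exact hpos y⟩ ⟨x, hx, rfl⟩
  apply le_antisymm
  · refine le_csInf (hU.image _) ?_
    rintro _ ⟨x, hx : ‖(x : H)‖ = 1, rfl⟩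
    rcases le_or_gt m 0 with hm0 | hm0
    · exact hm0.trans (hpos x)
    · simpa [hx] using hsa.mul_norm_sq_le_re_inner hpos hm0
        (LinearPMap.mul_norm_le_of_forall_norm_eq_one hm) x
  · refine le_csInf (hU.image _) ?_
    rintro _ ⟨x, hx : ‖(x : H)‖ = 1, rfl⟩
    calc β ≤ (inner ℂ (T x) (x : H) : ℂ).re := hβ x hx
      _ ≤ ‖(inner ℂ (T x) (x : H) : ℂ)‖ := Complex.re_le_norm _
      _ ≤ ‖T x‖ * ‖(x : H)‖ := norm_inner_le_norm _ _
      _ = ‖T x‖ := by rw [hx, mul_one]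

/-- For a densely defined closed positive operator `T`, the minimum modulus equals the
infimum of the quadratic form `⟨Tx, x⟩` over unit vectors of the domain. -/
theorem minModulus_eq_sInf_quadraticForm {H : Type*}
    [NormedAddCommGroup H] [InnerProductSpace ℂ H] [CompleteSpace H] [Nontrivial H]
    (T : H →ₗ.[ℂ] H)
    (hdense : Dense (T.domain : Set H)) (hclosed : T.IsClosed)
    (hsa : IsSelfAdjoint T)
    (hpos : ∀ x : T.domain, 0 ≤ (inner ℂ (T x) (x : H) : ℂ).re) :
    minModulus T =
      sInf ((fun x : T.domain => (inner ℂ (T x) (x : H) : ℂ).re) ''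
        {x : T.domain | ‖(x : H)‖ = 1}) :=
  minModulus_eq_sInf_quadraticForm_general T hsa hpos
end
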